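/- There exists ε₀ > 0 such that the following holds for every ε ∈ (0, ε₀). Let 0 ≤ p₁ < p₂ < ⋯ < pₙ with p_{i+1} − pᵢ ≤ ε³ for all i ∈ {1,…,n−1}, and let s₁,…,sₙ, b₁,…,bₙ ≥ 0 satisfy 1 ≤ Σᵢ sᵢ ≤ 1 + ε³, 1 ≤ Σᵢ bᵢ ≤ 1 + ε³, and Σᵢ Σⱼ max(pᵢ, pⱼ)·sᵢ·bⱼ ≥ 1. Set r = [ max_{t ∈ {1,…,n}} ( Σᵢ sᵢ pᵢ + Σ_{i=1}^{t−1} Σ_{j=t+1}^{n} sᵢ bⱼ (pⱼ − pᵢ) ) ] / [ Σᵢ Σⱼ max(pᵢ, pⱼ)·sᵢ·bⱼ ]. Then there exists an instance I = (F_S, F_B) of bilateral trade with 0 < OPT(I) < ∞ such that sup_{p ≥ 0} W(I,p) ≤ (r + ε) · OPT(I). -/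
import Mathlib


open MeasureTheory

/-- Expected welfare of the fixed price `p` on the bilateral-trade instance `(μ, ν)`. -/
noncomputable def welfare (μ ν : Measure ℝ) (p : ℝ) : ℝ :=
  ∫ z : ℝ × ℝ, (z.1 + if z.1 ≤ p ∧ p ≤ z.2 then z.2 - z.1 else 0) ∂(μ.prod ν)

/-- Optimal welfare `OPT(I) = E[max(S,B)]`. -/
noncomputable def optWelfare (μ ν : Measure ℝ) : ℝ :=
  ∫ z : ℝ × ℝ, max z.1 z.2 ∂(μ.prod ν)

section Aux

open Measure

variable {α : Type*} [MeasurableSpace α] [MeasurableSingletonClass α]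

lemma integrable_dirac' {E : Type*} [NormedAddCommGroup E] (f : α → E) (a : α) :
    Integrable f (Measure.dirac a) := by
  have h : f =ᵐ[Measure.dirac a] fun _ => f a := by
    rw [ae_dirac_eq]; exact Filter.eventually_pure.2 rfl
  exact (integrable_const (f a)).congr h.symm

lemma integrable_discreteSum {E : Type*} [NormedAddCommGroup E] {ι : Type*} (I : Finset ι)
    (c : ι → ℝ) (x : ι → α) (f : α → E) :
    Integrable f (∑ i ∈ I, ENNReal.ofReal (c i) • Measure.dirac (x i)) := by
  rw [integrable_finset_sum_measure]
  intro i _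
  exact (integrable_dirac' f (x i)).smul_measure ENNReal.ofReal_ne_top

lemma isFiniteMeasure_discreteSum {ι : Type*} (I : Finset ι) (c : ι → ℝ) (x : ι → α) :
    IsFiniteMeasure (∑ i ∈ I, ENNReal.ofReal (c i) • Measure.dirac (x i)) := by
  constructor
  rw [Measure.finset_sum_apply]
  refine ENNReal.sum_lt_top.2 fun i _ => ?_
  simp [Measure.smul_apply, measure_univ]

lemma prod_discreteSum {n m : ℕ} (c : Fin n → ℝ) (d : Fin m → ℝ) (x : Fin n → ℝ)
    (y : Fin m → ℝ) :
    (∑ i, ENNReal.ofReal (c i) • Measure.dirac (x i)).prod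
      (∑ j, ENNReal.ofReal (d j) • Measure.dirac (y j)) =
    ∑ i, ∑ j, (ENNReal.ofReal (c i) * ENNReal.ofReal (d j)) •
      Measure.dirac ((x i, y j) : ℝ × ℝ) := by
  haveI := isFiniteMeasure_discreteSum Finset.univ c x
  haveI := isFiniteMeasure_discreteSum Finset.univ d y
  refine Measure.prod_eq fun S T hS hT => ?_
  rw [Measure.finset_sum_apply, Measure.finset_sum_apply, Measure.finset_sum_apply]
  rw [Finset.sum_mul_sum]
  refine Finset.sum_congr rfl fun i _ => ?_
  rw [Measure.finset_sum_apply]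
  refine Finset.sum_congr rfl fun j _ => ?_
  rw [Measure.smul_apply, Measure.smul_apply, Measure.smul_apply,
    Measure.dirac_apply' _ (hS.prod hT), Measure.dirac_apply' _ hS, Measure.dirac_apply' _ hT]
  rw [Set.indicator_prod_one]
  simp only [smul_eq_mul]
  ring

lemma integral_discreteProd {n m : ℕ} (c : Fin n → ℝ) (d : Fin m → ℝ)
    (hc : ∀ i, 0 ≤ c i) (hd : ∀ j, 0 ≤ d j) (x : Fin n → ℝ) (y : Fin m → ℝ) (f : ℝ × ℝ → ℝ) :
    ∫ z, f z ∂((∑ i, ENNReal.ofReal (c i) • Measure.dirac (x i)).prod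
      (∑ j, ENNReal.ofReal (d j) • Measure.dirac (y j))) =
    ∑ i, ∑ j, c i * d j * f (x i, y j) := by
  rw [prod_discreteSum]
  rw [integral_finset_sum_measure (fun i _ => ?_)]
  · refine Finset.sum_congr rfl fun i _ => ?_
    rw [integral_finset_sum_measure (fun j _ => ?_)]
    · refine Finset.sum_congr rfl fun j _ => ?_
      rw [integral_smul_measure, integral_dirac]
      rw [ENNReal.toReal_mul, ENNReal.toReal_ofReal (hc i), ENNReal.toReal_ofReal (hd j)]
      simp [smul_eq_mul]
    · exact (integrable_dirac' f _).smul_measure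
        (ENNReal.mul_ne_top ENNReal.ofReal_ne_top ENNReal.ofReal_ne_top)
  · rw [integrable_finset_sum_measure]
    intro j _
    exact (integrable_dirac' f _).smul_measure
      (ENNReal.mul_ne_top ENNReal.ofReal_ne_top ENNReal.ofReal_ne_top)

lemma integrable_discreteProd {n m : ℕ} (c : Fin n → ℝ) (d : Fin m → ℝ)
    (x : Fin n → ℝ) (y : Fin m → ℝ) (f : ℝ × ℝ → ℝ) :
    Integrable f ((∑ i, ENNReal.ofReal (c i) • Measure.dirac (x i)).prod
      (∑ j, ENNReal.ofReal (d j) • Measure.dirac (y j))) := by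
  rw [prod_discreteSum, integrable_finset_sum_measure]
  intro i _
  rw [integrable_finset_sum_measure]
  intro j _
  exact (integrable_dirac' f _).smul_measure
    (ENNReal.mul_ne_top ENNReal.ofReal_ne_top ENNReal.ofReal_ne_top)

end Aux

set_option maxHeartbeats 1000000 in
/-- Generating a hard instance from a near-feasible discretized solution: for all small
enough `ε > 0`, from any grid with gaps at most `ε³` and weights `s, b` with masses in
`[1, 1 + ε³]` and discretized optimal welfare at least `1`, letting `r` be the ratio of
the best discretized fixed-price welfare to the discretized optimal welfare, there is
an instance on which every fixed price gets at most `(r + ε)` of the optimal welfare. -/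
theorem stmt_19 :
    ∃ ε₀ : ℝ, 0 < ε₀ ∧ ∀ ε : ℝ, 0 < ε → ε < ε₀ →
      ∀ (n : ℕ) (p s b : Fin (n + 1) → ℝ),
        0 ≤ p 0 → StrictMono p →
        (∀ i : Fin n, p i.succ - p i.castSucc ≤ ε ^ 3) →
        (∀ i, 0 ≤ s i) → (∀ i, 0 ≤ b i) →
        1 ≤ ∑ i, s i → (∑ i, s i) ≤ 1 + ε ^ 3 →
        1 ≤ ∑ i, b i → (∑ i, b i) ≤ 1 + ε ^ 3 →
        1 ≤ ∑ i, ∑ j, max (p i) (p j) * s i * b j →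
        ∀ r : ℝ,
          r = (⨆ t : Fin (n + 1), (∑ i, s i * p i +
              ∑ i ∈ Finset.univ.filter (fun i => i < t),
                ∑ j ∈ Finset.univ.filter (fun j => t < j), s i * b j * (p j - p i))) /
            (∑ i, ∑ j, max (p i) (p j) * s i * b j) →
          ∃ μ ν : Measure ℝ, IsProbabilityMeasure μ ∧ IsProbabilityMeasure ν ∧
            μ (Set.Iio 0) = 0 ∧ ν (Set.Iio 0) = 0 ∧
            Integrable (fun z : ℝ × ℝ => max z.1 z.2) (μ.prod ν) ∧
            0 < optWelfare μ ν ∧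
            ∀ q : ℝ, 0 ≤ q → welfare μ ν q ≤ (r + ε) * optWelfare μ ν := by
  refine ⟨1/10, by norm_num, ?_⟩
  intro ε hε hε10 n p s b hp0 hpm hgap hsnn hbnn hS1 hS2 hB1 hB2 hD1 r hr
  have hε10' : ε < 1/10 := hε10
  -- abbreviations
  set S := ∑ i, s i with hSdef
  set B := ∑ i, b i with hBdef
  set D := ∑ i, ∑ j, max (p i) (p j) * s i * b j with hDdef
  clear_value S B D
  have hSpos : 0 < S := lt_of_lt_of_le one_pos hS1
  have hBpos : 0 < B := lt_of_lt_of_le one_pos hB1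
  have hDpos : 0 < D := lt_of_lt_of_le one_pos hD1
  have hpnn : ∀ i, 0 ≤ p i := fun i => le_trans hp0 (hpm.monotone (Fin.zero_le i))
  have hε3 : 0 < ε ^ 3 := by positivity
  have hεcube : ε ^ 3 ≤ 1 / 1000 := by nlinarith [mul_pos hε hε, mul_pos (mul_pos hε hε) hε]
  have hε5 : 0 ≤ 1 - 5 * ε^2 - 2 * ε^3 := by nlinarith [mul_pos hε hε, mul_pos (mul_pos hε hε) hε]
  -- the supports
  set x : Fin (n + 1) → ℝ := fun i => p i + ε ^ 3 with hxdef
  set y : Fin (n + 1) → ℝ :=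
    fun j => p ⟨j.1 - 1, Nat.lt_of_le_of_lt (Nat.sub_le _ _) j.isLt⟩ with hydef
  have hxnn : ∀ i, 0 ≤ x i := fun i => by
    have := hpnn i; simp only [hxdef]; linarith
  have hynn : ∀ j, 0 ≤ y j := fun j => hpnn _
  have hyle : ∀ j, y j ≤ p j := fun j => hpm.monotone (by
    simp only [Fin.le_def]; exact Nat.sub_le _ _)
  have hyge : ∀ j, p j - ε ^ 3 ≤ y j := by
    intro j
    rcases Nat.eq_zero_or_pos j.1 with hj | hj
    · have : (⟨j.1 - 1, Nat.lt_of_le_of_lt (Nat.sub_le _ _) j.isLt⟩ : Fin (n+1)) = j := by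
        ext; simp [hj]
      simp only [hydef, this]; linarith
    · have hjn : j.1 - 1 < n := by omega
      have := hgap ⟨j.1 - 1, hjn⟩
      have h1 : (Fin.succ ⟨j.1 - 1, hjn⟩ : Fin (n+1)) = j := by
        ext; simp [Fin.succ]; omega
      have h2 : (Fin.castSucc ⟨j.1 - 1, hjn⟩ : Fin (n+1)) =
          ⟨j.1 - 1, Nat.lt_of_le_of_lt (Nat.sub_le _ _) j.isLt⟩ := by
        ext; simp [Fin.castSucc]
      rw [h1, h2] at this
      simp only [hydef]; linarith
  clear_value x y
  -- the measures
  set μ : Measure ℝ := ∑ i, ENNReal.ofReal (s i / S) • Measure.dirac (x i) with hμdef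
  set ν : Measure ℝ := ∑ j, ENNReal.ofReal (b j / B) • Measure.dirac (y j) with hνdef
  clear_value μ ν
  have hcnn : ∀ i, 0 ≤ s i / S := fun i => div_nonneg (hsnn i) hSpos.le
  have hdnn : ∀ j, 0 ≤ b j / B := fun j => div_nonneg (hbnn j) hBpos.le
  have hprobμ : IsProbabilityMeasure μ := by
    constructor
    rw [hμdef, Measure.finset_sum_apply]
    have : ∀ i ∈ Finset.univ, (ENNReal.ofReal (s i / S) • Measure.dirac (x i)) Set.univ
        = ENNReal.ofReal (s i / S) := by
      intro i _; simp [Measure.smul_apply, measure_univ]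
    rw [Finset.sum_congr rfl this, ← ENNReal.ofReal_sum_of_nonneg (fun i _ => hcnn i)]
    rw [← Finset.sum_div, ← hSdef, div_self hSpos.ne']
    simp
  have hprobν : IsProbabilityMeasure ν := by
    constructor
    rw [hνdef, Measure.finset_sum_apply]
    have : ∀ j ∈ Finset.univ, (ENNReal.ofReal (b j / B) • Measure.dirac (y j)) Set.univ
        = ENNReal.ofReal (b j / B) := by
      intro j _; simp [Measure.smul_apply, measure_univ]
    rw [Finset.sum_congr rfl this, ← ENNReal.ofReal_sum_of_nonneg (fun j _ => hdnn j)]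
    rw [← Finset.sum_div, ← hBdef, div_self hBpos.ne']
    simp
  have hμIio : μ (Set.Iio 0) = 0 := by
    rw [hμdef, Measure.finset_sum_apply]
    refine Finset.sum_eq_zero fun i _ => ?_
    rw [Measure.smul_apply, Measure.dirac_apply' _ measurableSet_Iio,
      Set.indicator_of_notMem (by simpa using not_lt.2 (hxnn i))]
    simp
  have hνIio : ν (Set.Iio 0) = 0 := by
    rw [hνdef, Measure.finset_sum_apply]
    refine Finset.sum_eq_zero fun j _ => ?_
    rw [Measure.smul_apply, Measure.dirac_apply' _ measurableSet_Iio,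
      Set.indicator_of_notMem (by simpa using not_lt.2 (hynn j))]
    simp
  -- weighted sums to plain sums
  have hsum_div : ∀ g : Fin (n+1) → Fin (n+1) → ℝ,
      (∑ i, ∑ j, s i / S * (b j / B) * g i j) = (∑ i, ∑ j, s i * b j * g i j) / (S * B) := by
    intro g
    rw [Finset.sum_div]
    refine Finset.sum_congr rfl fun i _ => ?_
    rw [Finset.sum_div]
    refine Finset.sum_congr rfl fun j _ => ?_
    field_simp
  -- integral formulas
  have hOPT : optWelfare μ ν = (∑ i, ∑ j, s i * b j * max (x i) (y j)) / (S * B) := by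
    rw [optWelfare, hμdef, hνdef,
      integral_discreteProd _ _ hcnn hdnn x y (fun z => max z.1 z.2)]
    exact hsum_div _
  have hWEL : ∀ q : ℝ, welfare μ ν q =
      (∑ i, ∑ j, s i * b j * (x i + if x i ≤ q ∧ q ≤ y j then y j - x i else 0)) / (S * B) := by
    intro q
    rw [welfare, hμdef, hνdef,
      integral_discreteProd _ _ hcnn hdnn x y
        (fun z => z.1 + if z.1 ≤ q ∧ q ≤ z.2 then z.2 - z.1 else 0)]
    exact hsum_div _
  -- N and supN
  set N : Fin (n + 1) → ℝ := fun t => ∑ i, s i * p i +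
      ∑ i ∈ Finset.univ.filter (fun i => i < t),
        ∑ j ∈ Finset.univ.filter (fun j => t < j), s i * b j * (p j - p i) with hNdef
  set supN := ⨆ t, N t with hsupNdef
  set P := ∑ i, s i * p i with hPdef
  clear_value N supN P
  have hPnn : 0 ≤ P := by
    rw [hPdef]; exact Finset.sum_nonneg fun i _ => mul_nonneg (hsnn i) (hpnn i)
  have hPD : P ≤ D := by
    have h1 : P * B ≤ D := by
      rw [hPdef, hBdef, hDdef, Finset.sum_mul]
      refine Finset.sum_le_sum fun i _ => ?_
      rw [Finset.mul_sum]
      refine Finset.sum_le_sum fun j _ => ?_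
      have : p i ≤ max (p i) (p j) := le_max_left _ _
      nlinarith [mul_nonneg (mul_nonneg (sub_nonneg.2 this) (hsnn i)) (hbnn j)]
    nlinarith [mul_nonneg hPnn (by linarith : (0:ℝ) ≤ B - 1)]
  -- N t as a full double sum with indicators, and N t ≤ D
  have hNind : ∀ t, N t = P + ∑ i, ∑ j,
      (if i < t ∧ t < j then s i * b j * (p j - p i) else 0) := by
    intro t
    simp only [hNdef]
    congr 1
    rw [Finset.sum_filter]
    refine Finset.sum_congr rfl fun i _ => ?_
    rw [Finset.sum_filter]
    by_cases h : i < t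
    · simp only [h, if_true, true_and]
    · simp only [h, if_false, false_and, if_false, Finset.sum_const_zero]
  have hND : ∀ t, N t ≤ D := by
    intro t
    rw [hNind t]
    have h1 : P ≤ ∑ i, ∑ j, s i * b j * p i := by
      have : ∑ i, ∑ j, s i * b j * p i = P * B := by
        rw [hPdef, hBdef, Finset.sum_mul]
        refine Finset.sum_congr rfl fun i _ => ?_
        rw [Finset.mul_sum]
        refine Finset.sum_congr rfl fun j _ => ?_
        ring
      rw [this]; nlinarith
    have h2 : ∑ i, ∑ j, s i * b j * p i +
        (∑ i, ∑ j, (if i < t ∧ t < j then s i * b j * (p j - p i) else 0)) ≤ D := by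
      rw [← Finset.sum_add_distrib, hDdef]
      refine Finset.sum_le_sum fun i _ => ?_
      rw [← Finset.sum_add_distrib]
      refine Finset.sum_le_sum fun j _ => ?_
      by_cases h : i < t ∧ t < j
      · have hij : i < j := lt_trans h.1 h.2
        have : p i ≤ p j := (hpm hij).le
        rw [if_pos h, max_eq_right this]
        nlinarith [hsnn i, hbnn j]
        
      · rw [if_neg h]
        have : p i ≤ max (p i) (p j) := le_max_left _ _
        nlinarith [mul_nonneg (mul_nonneg (sub_nonneg.2 this) (hsnn i)) (hbnn j)]
    linarith
  have hbdd : BddAbove (Set.range N) := (Set.finite_range N).bddAbove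
  have hsupD : supN ≤ D := by rw [hsupNdef]; exact ciSup_le hND
  have hsup0 : 0 ≤ supN := by
    rw [hsupNdef]
    refine le_trans ?_ (le_ciSup hbdd 0)
    rw [hNind 0]
    have : ∑ i, ∑ j, (if i < (0 : Fin (n+1)) ∧ (0 : Fin (n+1)) < j
        then s i * b j * (p j - p i) else 0) = 0 := by
      refine Finset.sum_eq_zero fun i _ => Finset.sum_eq_zero fun j _ => ?_
      rw [if_neg]
      rintro ⟨h1, -⟩
      exact Fin.not_lt_zero i h1
    rw [this]; linarith
  have hrval : r = supN / D := hr
  have hrnn : 0 ≤ r := by rw [hrval]; exact div_nonneg hsup0 hDpos.le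
  have hrD : r * D = supN := by rw [hrval]; field_simp
  -- lower bound for V' = SB * OPT
  set V : ℝ := ∑ i, ∑ j, s i * b j * max (x i) (y j) with hVdef
  clear_value V
  have hSB : S * B ≤ (1 + ε^3) * (1 + ε^3) := by nlinarith
  have hSB2 : S * B ≤ 2 := by nlinarith [hε3]
  have hSBD : ε^3 * (S * B) ≤ 2 * ε^3 * D := by
    nlinarith [mul_le_mul_of_nonneg_left hSB2 hε3.le,
      mul_le_mul_of_nonneg_left hD1 (by positivity : (0:ℝ) ≤ 2 * ε^3)]
  have hVge : D - 2 * ε^3 * D ≤ V := by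
    have h1 : ∑ i, ∑ j, (max (p i) (p j) * s i * b j - s i * b j * ε^3) ≤ V := by
      rw [hVdef]
      refine Finset.sum_le_sum fun i _ => Finset.sum_le_sum fun j _ => ?_
      have hmax : max (p i) (p j) - ε^3 ≤ max (x i) (y j) := by
        rcases le_total (p i) (p j) with h | h
        · have := hyge j
          calc max (p i) (p j) - ε^3 = p j - ε^3 := by rw [max_eq_right h]
          _ ≤ y j := this
          _ ≤ max (x i) (y j) := le_max_right _ _
        · have hpx : p i ≤ x i := by simp only [hxdef]; linarith
          calc max (p i) (p j) - ε^3 = p i - ε^3 := by rw [max_eq_left h]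
          _ ≤ x i := by linarith
          _ ≤ max (x i) (y j) := le_max_left _ _
      nlinarith [mul_nonneg (hsnn i) (hbnn j)]
    have e1 : ∑ i, ∑ j, (max (p i) (p j) * s i * b j - s i * b j * ε^3)
        = D - ∑ i, ∑ j, s i * b j * ε^3 := by
      rw [hDdef, ← Finset.sum_sub_distrib]
      refine Finset.sum_congr rfl fun i _ => ?_
      rw [← Finset.sum_sub_distrib]
    have e2 : ∑ i, ∑ j, s i * b j * ε^3 = S * B * ε^3 := by
      rw [hSdef, hBdef, Finset.sum_mul_sum, Finset.sum_mul]
      refine Finset.sum_congr rfl fun i _ => ?_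
      rw [Finset.sum_mul]
    have h3 : ε^3 * (S * B) ≤ 2 * ε^3 * D := hSBD
    rw [e1, e2] at h1
    linarith
  -- per-price numerator bound
  have hcore : ∀ q : ℝ,
      (∑ i, ∑ j, s i * b j * (x i + if x i ≤ q ∧ q ≤ y j then y j - x i else 0))
        ≤ supN + 3 * ε^3 * D := by
    intro q
    set G := ∑ i, ∑ j, s i * b j * (if x i ≤ q ∧ q ≤ y j then y j - x i else 0) with hGdef
    clear_value G
    have hsplit : (∑ i, ∑ j, s i * b j * (x i + if x i ≤ q ∧ q ≤ y j then y j - x i else 0))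
        = (∑ i, s i * x i) * B + G := by
      rw [hGdef, Finset.sum_mul, ← Finset.sum_add_distrib]
      refine Finset.sum_congr rfl fun i _ => ?_
      rw [hBdef, Finset.mul_sum, ← Finset.sum_add_distrib]
      refine Finset.sum_congr rfl fun j _ => ?_
      ring
    have hfirst : (∑ i, s i * x i) * B ≤ P + 3 * ε^3 * D := by
      have e3 : ∑ i, s i * x i = P + ε^3 * S := by
        rw [hPdef, hSdef, Finset.mul_sum, ← Finset.sum_add_distrib]
        refine Finset.sum_congr rfl fun i _ => ?_
        simp only [hxdef]; ring
      rw [e3]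
      have h4 : P * B ≤ P + ε^3 * D := by nlinarith [hPnn, hPD, hε3]
      have h5 : ε^3 * S * B ≤ 2 * ε^3 * D := by nlinarith [hSBD]
      nlinarith
    have hG : ∃ t' : Fin (n+1), G ≤ ∑ i ∈ Finset.univ.filter (fun i => i < t'),
        ∑ j ∈ Finset.univ.filter (fun j => t' < j), s i * b j * (p j - p i) := by
      by_cases hT : ∃ i j, x i ≤ q ∧ q ≤ y j
      · obtain ⟨i₀, j₀, h1, h2⟩ := hT
        set T := Finset.univ.filter (fun k : Fin (n+1) => x k ≤ q) with hTdef
        have hTne : T.Nonempty := ⟨i₀, Finset.mem_filter.2 ⟨Finset.mem_univ _, h1⟩⟩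
        set t := T.max' hTne with htdef
        have hxt : x t ≤ q := (Finset.mem_filter.1 (T.max'_mem hTne)).2
        have hmaxt : ∀ k, x k ≤ q → k ≤ t :=
          fun k hk => T.le_max' k (Finset.mem_filter.2 ⟨Finset.mem_univ _, hk⟩)
        have hxt' : p t + ε ^ 3 ≤ q := by
          have h := hxt
          simp only [hxdef] at h
          exact h
        have hjgt : ∀ j : Fin (n+1), q ≤ y j → t.1 + 1 < j.1 := by
          intro j hj
          simp only [hydef] at hj
          have h3 : p t < p ⟨j.1 - 1, Nat.lt_of_le_of_lt (Nat.sub_le _ _) j.isLt⟩ := by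
            linarith
          have h4 : t < (⟨j.1 - 1, Nat.lt_of_le_of_lt (Nat.sub_le _ _) j.isLt⟩ : Fin (n+1)) :=
            hpm.lt_iff_lt.1 h3
          have h5 : t.1 < j.1 - 1 := Fin.lt_def.mp h4
          omega
        have hlt : t.1 + 1 < n + 1 := by have := hjgt j₀ h2; omega
        refine ⟨⟨t.1 + 1, hlt⟩, ?_⟩
        rw [hGdef, Finset.sum_filter]
        refine Finset.sum_le_sum fun i _ => ?_
        by_cases hi : i < (⟨t.1 + 1, hlt⟩ : Fin (n+1))
        · rw [if_pos hi, Finset.sum_filter]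
          refine Finset.sum_le_sum fun j _ => ?_
          by_cases hij : x i ≤ q ∧ q ≤ y j
          · have hj : (⟨t.1 + 1, hlt⟩ : Fin (n+1)) < j := by
              have h := hjgt j hij.2
              exact Fin.lt_def.mpr h
            rw [if_pos hij, if_pos hj]
            have hpx : p i ≤ x i := by simp only [hxdef]; linarith
            have hv : y j - x i ≤ p j - p i := by
              have := hyle j; linarith
            exact mul_le_mul_of_nonneg_left hv (mul_nonneg (hsnn i) (hbnn j))
          · rw [if_neg hij, mul_zero]
            by_cases hj : (⟨t.1 + 1, hlt⟩ : Fin (n+1)) < j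
            · rw [if_pos hj]
              have hpij : p i ≤ p j := (hpm (lt_trans hi hj)).le
              have := mul_nonneg (hsnn i) (hbnn j)
              nlinarith
            · rw [if_neg hj]
        · rw [if_neg hi]
          have hno : ∀ j, ¬(x i ≤ q ∧ q ≤ y j) := by
            intro j hij
            have h6 : i.1 ≤ t.1 := Fin.le_def.mp (hmaxt i hij.1)
            have h7 : i.1 < t.1 + 1 := by omega
            exact hi (Fin.lt_def.mpr h7)
          have : ∑ j, s i * b j * (if x i ≤ q ∧ q ≤ y j then y j - x i else 0) = 0 :=
            Finset.sum_eq_zero fun j _ => by rw [if_neg (hno j), mul_zero]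
          rw [this]
      · push_neg at hT
        refine ⟨0, ?_⟩
        have hG0 : G = 0 := by
          rw [hGdef]
          refine Finset.sum_eq_zero fun i _ => Finset.sum_eq_zero fun j _ => ?_
          rw [if_neg (fun h => absurd h.2 (not_le.mpr (hT i j h.1))), mul_zero]
        have hR0 : (∑ i ∈ Finset.univ.filter (fun i => i < (0 : Fin (n+1))),
            ∑ j ∈ Finset.univ.filter (fun j => (0 : Fin (n+1)) < j),
              s i * b j * (p j - p i)) = 0 := by
          refine Finset.sum_eq_zero fun i hi => ?_
          exact absurd (Finset.mem_filter.1 hi).2 (Fin.not_lt_zero i)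
        rw [hG0, hR0]
    obtain ⟨t', hGt⟩ := hG
    have hsup : N t' ≤ supN := by rw [hsupNdef]; exact le_ciSup hbdd t'
    have hNt : N t' = P + ∑ i ∈ Finset.univ.filter (fun i => i < t'),
        ∑ j ∈ Finset.univ.filter (fun j => t' < j), s i * b j * (p j - p i) := by
      simp only [hNdef]
    rw [hsplit]
    linarith
  -- assemble
  refine ⟨μ, ν, hprobμ, hprobν, hμIio, hνIio, ?_, ?_, ?_⟩
  · rw [hμdef, hνdef]
    exact integrable_discreteProd _ _ x y (fun z => max z.1 z.2)
  · rw [hOPT]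
    apply div_pos
    · nlinarith [hVge, hD1, hε3]
    · exact mul_pos hSpos hBpos
  · intro q hq
    rw [hWEL q, hOPT, ← mul_div_assoc]
    have hSBpos : 0 < S * B := mul_pos hSpos hBpos
    have hnum : (∑ i, ∑ j, s i * b j * (x i + if x i ≤ q ∧ q ≤ y j then y j - x i else 0))
        ≤ (r + ε) * V := by
      have h1 := hcore q
      have h2 : (r + ε) * (D - 2 * ε^3 * D) ≤ (r + ε) * V :=
        mul_le_mul_of_nonneg_left hVge (add_nonneg hrnn hε.le)
      have hexp : (r + ε) * (D - 2 * ε^3 * D)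
          = supN + ε * D - 2 * ε^3 * supN - 2 * ε^4 * D := by
        linear_combination (1 - 2 * ε^3) * hrD
      have h3 : supN + 3 * ε^3 * D ≤ supN + ε * D - 2 * ε^3 * supN - 2 * ε^4 * D := by
        have h6 : 2 * ε^3 * supN ≤ 2 * ε^3 * D :=
          mul_le_mul_of_nonneg_left hsupD (by positivity)
        have h7 : 0 ≤ ε * D * (1 - 5 * ε^2 - 2 * ε^3) :=
          mul_nonneg (mul_pos hε hDpos).le hε5
        linarith only [h6, h7]
      linarith only [h1, h2, h3, hexp]
    exact (div_le_div_iff_of_pos_right hSBpos).mpr hnum
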